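/- arXiv:1807.08371 — 4 statements merged into one kernel-verified Lean document; each statement's English description precedes it below -/
import Mathlib

section
/- Fix d ≥ 1 and a word α ∈ F_d of length m. Then there exist n×n complex matrices Z_1,…,Z_d with n = m + 1, forming a strict row contraction (‖Z_1Z_1* + … + Z_dZ_d*‖ < 1) and jointly nilpotent in the sense that Z^β = 0 for every word β of length > m, together with vectors y, v ∈ ℂⁿ, such that for every word β ∈ F_d one has ⟨y, Z^β v⟩ = 1 if β = α and ⟨y, Z^β v⟩ = 0 if β ≠ α. -/
/-! Let `α` have letters read backwards `r₀ r₁ … r_{m-1}`, and let `Z_j` be the weighted shift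
`e_p ↦ c e_{p+1}` on the positions `p` with `r_p = j` (and `0` on the others). Then `Z^β e₀`
vanishes unless `β` is a suffix of `α`, in which case it is `c^{|β|} e_{|β|}`; so pairing with
`e_m` isolates `β = α`, and no word longer than `m` survives. Each `Z_j` is a sum of at most `m`
rank-one operators of norm `|c|`, so `‖∑ Z_j Z_j*‖ ≤ d (m |c|)² < 1` once `c` is small. -/

instance (d : ℕ) : DecidableEq (FreeMonoid (Fin d)) :=
  fun a b => decidable_of_iff _ (FreeMonoid.toList.apply_eq_iff_eq (x := a) (y := b))

noncomputable section

/-- Words in the letters `{1,…,d}`. -/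
abbrev Word (d : ℕ) := FreeMonoid (Fin d)

/-- For a word `β = i₁⋯i_k` and operators `Z_1,…,Z_d` on `ℂⁿ`,
`Z^β := Z_{i₁}⋯Z_{i_k}` (with `Z^∅ = I`). -/
def Zw {d n : ℕ} (Z : Fin d → (EuclideanSpace ℂ (Fin n) →L[ℂ] EuclideanSpace ℂ (Fin n)))
    (β : Word d) : EuclideanSpace ℂ (Fin n) →L[ℂ] EuclideanSpace ℂ (Fin n) :=
  ((FreeMonoid.toList β).map Z).prod

theorem List.cons_prefix_drop_iff {α : Type*} {a : α} {l t : List α} {q : ℕ} :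
    a :: l <+: t.drop q ↔ t[q]? = some a ∧ l <+: t.drop (q + 1) := by
  by_cases hq : q < t.length
  · rw [List.drop_eq_getElem_cons hq, List.cons_prefix_cons, List.getElem?_eq_getElem hq,
      Option.some_inj, eq_comm]
  · rw [List.drop_of_length_le (by omega), List.getElem?_eq_none (by omega)]
    simp

theorem ContinuousLinearMap.norm_sum_mul_adjoint_le {𝕜 H ι : Type*} [RCLike 𝕜]
    [NormedAddCommGroup H] [InnerProductSpace 𝕜 H] [CompleteSpace H] (s : Finset ι)
    (T : ι → H →L[𝕜] H) :
    ‖∑ j ∈ s, T j * adjoint (T j)‖ ≤ ∑ j ∈ s, ‖T j‖ ^ 2 := by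
  refine (norm_sum_le _ _).trans (Finset.sum_le_sum fun j _ => ?_)
  rw [← star_eq_adjoint, sq]
  exact CStarRing.norm_self_mul_star.le

def natSingle (n p : ℕ) : EuclideanSpace ℂ (Fin n) :=
  if h : p < n then EuclideanSpace.single ⟨p, h⟩ 1 else 0

theorem inner_natSingle_natSingle {n : ℕ} (p q : ℕ) :
    inner ℂ (natSingle n p) (natSingle n q) = if p = q ∧ p < n then 1 else 0 := by
  unfold natSingle
  by_cases hp : p < n
  · by_cases hq : q < n
    · simp only [hp, hq, dite_true, orthonormal_iff_ite.mp (EuclideanSpace.orthonormal_single),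
        Fin.mk.injEq, and_true]
    · simp only [hp, hq, dite_true, dite_false, inner_zero_right, and_true]
      exact (if_neg (by omega)).symm
  · simp [hp]

theorem norm_natSingle_le (n p : ℕ) : ‖natSingle n p‖ ≤ 1 := by
  unfold natSingle
  split <;> simp

theorem ContinuousLinearMap.eq_zero_of_natSingle {n : ℕ}
    {T : EuclideanSpace ℂ (Fin n) →L[ℂ] EuclideanSpace ℂ (Fin n)}
    (h : ∀ p, T (natSingle n p) = 0) : T = 0 := by
  apply ContinuousLinearMap.coe_injective
  refine (EuclideanSpace.basisFun (Fin n) ℂ).toBasis.ext fun i => ?_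
  simpa [natSingle] using h i

section wordShift

variable {d : ℕ} (w : List (Fin d)) (c : ℂ)

def wordShift (j : Fin d) :
    EuclideanSpace ℂ (Fin (w.length + 1)) →L[ℂ] EuclideanSpace ℂ (Fin (w.length + 1)) :=
  c • ∑ p ∈ (Finset.range w.length).filter (fun p => w.reverse[p]? = some j),
    (innerSL ℂ (natSingle _ p)).smulRight (natSingle _ (p + 1))

theorem wordShift_natSingle (j : Fin d) (q : ℕ) :
    wordShift w c j (natSingle _ q) =
      if w.reverse[q]? = some j then c • natSingle _ (q + 1) else 0 := by
  have hmem : ∀ p, p ∈ (Finset.range w.length).filter (fun p => w.reverse[p]? = some j) ↔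
      w.reverse[p]? = some j := fun p => by
    rw [Finset.mem_filter, Finset.mem_range, and_iff_right_iff_imp]
    intro h
    simpa using (List.getElem?_eq_some_iff.mp h).1
  have hterm : ∀ p ∈ (Finset.range w.length).filter (fun p => w.reverse[p]? = some j),
      inner ℂ (natSingle (w.length + 1) p) (natSingle _ q) • natSingle (w.length + 1) (p + 1) =
        if p = q then natSingle _ (q + 1) else 0 := fun p hp => by
    have hpw : p < w.length := by simpa using (Finset.mem_filter.mp hp).1
    rw [inner_natSingle_natSingle]
    by_cases hpq : p = q
    · subst hpq
      simp [Nat.lt_succ_of_lt hpw]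
    · simp [hpq]
  simp only [wordShift, smul_apply, sum_apply, ContinuousLinearMap.smulRight_apply, innerSL_apply_apply, Finset.sum_congr rfl hterm,
    Finset.sum_ite_eq', hmem]
  split_ifs <;> simp

theorem list_prod_map_wordShift_natSingle (b : List (Fin d)) (q : ℕ) :
    (b.map (wordShift w c)).prod (natSingle _ q) =
      if b.reverse <+: w.reverse.drop q then c ^ b.length • natSingle _ (q + b.length)
      else 0 := by
  induction b using List.reverseRecOn generalizing q with
  | nil => simp
  | append_singleton b j ih =>
    simp only [List.map_append, List.prod_append, List.map_singleton, List.prod_singleton,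
      mul_apply_eq_comp, wordShift_natSingle, List.reverse_concat',
      List.cons_prefix_drop_iff]
    by_cases hj : w.reverse[q]? = some j
    · rw [if_pos hj, map_smul, ih]
      simp only [hj, true_and, List.length_append, List.length_singleton]
      split_ifs
      · rw [smul_smul, pow_succ', Nat.add_right_comm, Nat.add_assoc]
      · simp
    · simp [hj]

theorem norm_wordShift_le (j : Fin d) : ‖wordShift w c j‖ ≤ ‖c‖ * w.length := by
  rw [wordShift, norm_smul]
  refine mul_le_mul_of_nonneg_left ?_ (norm_nonneg c)
  refine (norm_sum_le _ _).trans ?_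
  calc _ ≤ ∑ _p ∈ (Finset.range w.length).filter (fun p => w.reverse[p]? = some j), (1 : ℝ) :=
        Finset.sum_le_sum fun p _ => by
          rw [ContinuousLinearMap.norm_smulRight_apply, innerSL_apply_norm]
          exact mul_le_one₀ (norm_natSingle_le _ _) (norm_nonneg _) (norm_natSingle_le _ _)
    _ ≤ w.length := by
        simpa using (Finset.card_filter_le _ _).trans (Finset.card_range w.length).le

theorem zw_wordShift_eq_zero_of_length_lt (β : Word d) (hβ : w.length < β.toList.length) :
    Zw (wordShift w c) β = 0 := by
  refine ContinuousLinearMap.eq_zero_of_natSingle fun p => ?_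
  rw [Zw, list_prod_map_wordShift_natSingle, if_neg]
  intro h
  have := h.length_le
  simp only [List.length_reverse, List.length_drop] at this
  omega

theorem inner_natSingle_zw_wordShift (β : Word d) :
    inner ℂ (natSingle _ w.length) (Zw (wordShift w c) β (natSingle _ 0)) =
      if β.toList = w then c ^ w.length else 0 := by
  rw [Zw, list_prod_map_wordShift_natSingle, List.drop_zero]
  by_cases hβ : β.toList = w
  · subst hβ
    rw [if_pos (List.prefix_refl _), if_pos rfl, inner_smul_right, inner_natSingle_natSingle,
      if_pos ⟨(zero_add _).symm, Nat.lt_succ_self _⟩, mul_one]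
  · rw [if_neg hβ]
    split_ifs with hprefix
    · rw [inner_smul_right, inner_natSingle_natSingle, if_neg, mul_zero]
      rintro ⟨hlen, -⟩
      exact hβ (List.reverse_injective (hprefix.eq_of_length (by simp; omega)))
    · exact inner_zero_right _

end wordShift

open ContinuousLinearMap in
theorem statement_8_general {d : ℕ} (α : Word d) :
    ∃ (Z : Fin d → (EuclideanSpace ℂ (Fin ((FreeMonoid.toList α).length + 1)) →L[ℂ]
        EuclideanSpace ℂ (Fin ((FreeMonoid.toList α).length + 1))))
      (y v : EuclideanSpace ℂ (Fin ((FreeMonoid.toList α).length + 1))),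
      ‖∑ j, Z j * adjoint (Z j)‖ < 1 ∧
      (∀ β : Word d, (FreeMonoid.toList β).length > (FreeMonoid.toList α).length →
        Zw Z β = 0) ∧
      (∀ β : Word d, (inner ℂ y (Zw Z β v) : ℂ) = if β = α then 1 else 0) := by
  set m := α.toList.length
  set c : ℂ := (((d + 1) * (m + 1) : ℕ) : ℂ)⁻¹ with hc
  have hc0 : c ≠ 0 := inv_ne_zero (Nat.cast_ne_zero.mpr (by positivity))
  refine ⟨wordShift α.toList c, natSingle _ m, (c ^ m)⁻¹ • natSingle _ 0, ?_,
    zw_wordShift_eq_zero_of_length_lt α.toList c, fun β => ?_⟩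
  · have hnorm : ‖c‖ * m < (d + 1 : ℝ)⁻¹ := by
      rw [hc, norm_inv, Complex.norm_natCast, ← div_eq_inv_mul, div_lt_iff₀ (by positivity)]
      push_cast
      rw [inv_mul_cancel_left₀ (by positivity)]
      linarith
    calc ‖∑ j, wordShift α.toList c j * adjoint (wordShift α.toList c j)‖
        ≤ ∑ j, ‖wordShift α.toList c j‖ ^ 2 := norm_sum_mul_adjoint_le _ _
      _ ≤ ∑ _j : Fin d, (d + 1 : ℝ)⁻¹ ^ 2 := Finset.sum_le_sum fun j _ =>
          pow_le_pow_left₀ (norm_nonneg _) ((norm_wordShift_le _ _ j).trans hnorm.le) 2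
      _ < 1 := by
          simp only [Finset.sum_const, Finset.card_univ, Fintype.card_fin, nsmul_eq_mul]
          rw [inv_pow, ← div_eq_mul_inv, div_lt_one (by positivity)]
          nlinarith
  · rw [map_smul, inner_smul_right, inner_natSingle_zw_wordShift]
    by_cases hβ : β = α
    · rw [if_pos (congrArg _ hβ), if_pos hβ]
      exact inv_mul_cancel₀ (pow_ne_zero _ hc0)
    · rw [if_neg (FreeMonoid.toList.injective.ne hβ), if_neg hβ, mul_zero]

open ContinuousLinearMap in
/-- for any word `α ∈ F_d` of length `m`, there exist a jointly nilpotent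
strict row contraction `Z = (Z_1,…,Z_d)` of operators on `ℂⁿ` with `n = m + 1`, and
vectors `y, v ∈ ℂⁿ`, such that `⟨y, Z^β v⟩ = δ_{β,α}` for every word `β`. -/
theorem statement_8 {d : ℕ} (hd : 1 ≤ d) (α : Word d) :
    ∃ (Z : Fin d → (EuclideanSpace ℂ (Fin ((FreeMonoid.toList α).length + 1)) →L[ℂ]
        EuclideanSpace ℂ (Fin ((FreeMonoid.toList α).length + 1))))
      (y v : EuclideanSpace ℂ (Fin ((FreeMonoid.toList α).length + 1))),
      ‖∑ j, Z j * adjoint (Z j)‖ < 1 ∧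
      (∀ β : Word d, (FreeMonoid.toList β).length > (FreeMonoid.toList α).length →
        Zw Z β = 0) ∧
      (∀ β : Word d, (inner ℂ y (Zw Z β v) : ℂ) = if β = α then 1 else 0) :=
  statement_8_general α

end
end

section
/- Let H and K be complex Hilbert spaces, let M ⊆ B(H, K) be a linear subspace, and let B ∈ M with ‖B‖ ≤ 1. Suppose B is column extreme in M, i.e. the only A ∈ M satisfying A*A + B*B ≤ I (equivalently, I − A*A − B*B positive semidefinite) is A = 0. Then B is an extreme point of the closed unit ball {T ∈ M : ‖T‖ ≤ 1}: whenever T₁, T₂ ∈ M with ‖T₁‖ ≤ 1, ‖T₂‖ ≤ 1, and B = (T₁ + T₂)/2, one has T₁ = T₂ = B. -/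
/-! If `B = (T₁ + T₂)/2` with `T₁, T₂` contractions, put `D = (T₁ - T₂)/2`, so that
`T₁ = B + D` and `T₂ = B - D`. The parallelogram law gives
`2 (‖B x‖² + ‖D x‖²) = ‖T₁ x‖² + ‖T₂ x‖² ≤ 2 ‖x‖²`, i.e. `D*D + B*B ≤ I`.
Since `D ∈ M`, column extremality forces `D = 0`, hence `T₁ = T₂ = B`. -/

theorem norm_sq_add_norm_sq_le_of_norm_add_le_of_norm_sub_le {𝕜 E : Type*} [RCLike 𝕜]
    [NormedAddCommGroup E] [InnerProductSpace 𝕜 E] {u v : E} {r : ℝ}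
    (h₁ : ‖u + v‖ ≤ r) (h₂ : ‖u - v‖ ≤ r) : ‖u‖ ^ 2 + ‖v‖ ^ 2 ≤ r ^ 2 := by
  have hpar := parallelogram_law_with_norm 𝕜 u v
  have hs₁ : ‖u + v‖ ^ 2 ≤ r ^ 2 := pow_le_pow_left₀ (norm_nonneg _) h₁ 2
  have hs₂ : ‖u - v‖ ^ 2 ≤ r ^ 2 := pow_le_pow_left₀ (norm_nonneg _) h₂ 2
  nlinarith

namespace ContinuousLinearMap

variable {𝕜 E F : Type*} [RCLike 𝕜]
  [NormedAddCommGroup E] [InnerProductSpace 𝕜 E] [CompleteSpace E]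
  [NormedAddCommGroup F] [InnerProductSpace 𝕜 F] [CompleteSpace F]

theorem reApplyInnerSelf_one_sub_adjoint_comp_self_sub_adjoint_comp_self
    (A B : E →L[𝕜] F) (x : E) :
    (1 - adjoint A ∘L A - adjoint B ∘L B).reApplyInnerSelf x
      = ‖x‖ ^ 2 - ‖A x‖ ^ 2 - ‖B x‖ ^ 2 := by
  simp only [reApplyInnerSelf_apply, sub_apply, one_apply_eq_self, comp_apply, inner_sub_left,
    adjoint_inner_left, inner_self_eq_norm_sq_to_K, map_sub, ← RCLike.ofReal_pow, RCLike.ofReal_re]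

theorem isPositive_one_sub_adjoint_comp_self_sub_adjoint_comp_self_iff (A B : E →L[𝕜] F) :
    (1 - adjoint A ∘L A - adjoint B ∘L B).IsPositive ↔
      ∀ x, ‖A x‖ ^ 2 + ‖B x‖ ^ 2 ≤ ‖x‖ ^ 2 := by
  have hsa : IsSelfAdjoint (1 - adjoint A ∘L A - adjoint B ∘L B) :=
    (IsSelfAdjoint.one _).sub (isPositive_adjoint_comp_self A).isSelfAdjoint
      |>.sub (isPositive_adjoint_comp_self B).isSelfAdjoint
  rw [isPositive_def', and_iff_right hsa]
  refine forall_congr' fun x ↦ ?_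
  rw [reApplyInnerSelf_one_sub_adjoint_comp_self_sub_adjoint_comp_self, sub_sub, sub_nonneg]

theorem isPositive_one_sub_adjoint_comp_self_sub_adjoint_comp_self_of_norm_add_le_one_of_norm_sub_le_one
    {B D : E →L[𝕜] F} (h₁ : ‖B + D‖ ≤ 1) (h₂ : ‖B - D‖ ≤ 1) :
    (1 - adjoint D ∘L D - adjoint B ∘L B).IsPositive := by
  refine (isPositive_one_sub_adjoint_comp_self_sub_adjoint_comp_self_iff D B).2 fun x ↦ ?_
  rw [add_comm]
  refine norm_sq_add_norm_sq_le_of_norm_add_le_of_norm_sub_le (𝕜 := 𝕜) ?_ ?_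
  · simpa using (B + D).le_of_opNorm_le h₁ x
  · simpa using (B - D).le_of_opNorm_le h₂ x

end ContinuousLinearMap

open ContinuousLinearMap in
theorem statement_11_general {H K : Type*}
    [NormedAddCommGroup H] [InnerProductSpace ℂ H] [CompleteSpace H]
    [NormedAddCommGroup K] [InnerProductSpace ℂ K] [CompleteSpace K]
    (M : Submodule ℂ (H →L[ℂ] K)) (B : H →L[ℂ] K)
    (hCE : ∀ A : H →L[ℂ] K, A ∈ M →
      (1 - (adjoint A).comp A - (adjoint B).comp B).IsPositive → A = 0) :
    ∀ T₁ T₂ : H →L[ℂ] K, T₁ ∈ M → T₂ ∈ M → ‖T₁‖ ≤ 1 → ‖T₂‖ ≤ 1 →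
      B = (2 : ℂ)⁻¹ • (T₁ + T₂) → T₁ = B ∧ T₂ = B := by
  intro T₁ T₂ hT₁M hT₂M hT₁ hT₂ hB
  set D : H →L[ℂ] K := (2 : ℂ)⁻¹ • (T₁ - T₂)
  have hBD₁ : B + D = T₁ := by rw [hB]; module
  have hBD₂ : B - D = T₂ := by rw [hB]; module
  have hD : D = 0 := hCE D (M.smul_mem _ (M.sub_mem hT₁M hT₂M))
    (isPositive_one_sub_adjoint_comp_self_sub_adjoint_comp_self_of_norm_add_le_one_of_norm_sub_le_one
      (hBD₁ ▸ hT₁) (hBD₂ ▸ hT₂))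
  rw [← hBD₁, ← hBD₂, hD, add_zero, sub_zero]
  exact ⟨rfl, rfl⟩

open ContinuousLinearMap in
/-- if `B` is a contraction in a linear subspace `M ⊆ B(H,K)` which is
column extreme in `M` (the only `A ∈ M` with `A*A + B*B ≤ I` is `A = 0`), then `B` is
an extreme point of the closed unit ball of `M`. -/
theorem statement_11 {H K : Type*}
    [NormedAddCommGroup H] [InnerProductSpace ℂ H] [CompleteSpace H]
    [NormedAddCommGroup K] [InnerProductSpace ℂ K] [CompleteSpace K]
    (M : Submodule ℂ (H →L[ℂ] K)) (B : H →L[ℂ] K)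
    (hBM : B ∈ M) (hB : ‖B‖ ≤ 1)
    (hCE : ∀ A : H →L[ℂ] K, A ∈ M →
      (1 - (adjoint A).comp A - (adjoint B).comp B).IsPositive → A = 0) :
    ∀ T₁ T₂ : H →L[ℂ] K, T₁ ∈ M → T₂ ∈ M → ‖T₁‖ ≤ 1 → ‖T₂‖ ≤ 1 →
      B = (2 : ℂ)⁻¹ • (T₁ + T₂) → T₁ = B ∧ T₂ = B :=
  statement_11_general M B hCE
end

section
/- Let H₁ and H₂ be complex Hilbert spaces and let T be a closed, densely defined linear operator from H₁ to H₂ with domain D = dom T. Let a ∈ B(H₁) be a positive (self-adjoint, positive semidefinite) bounded operator with range contained in D, and suppose that a²((I + T*T)x) = x for every x ∈ dom(T*T) := {x ∈ D : Tx ∈ dom T*}. Then for every h ∈ H₁ one has a²h ∈ dom(T*T) and (I + T*T)(a²h) = h (so that a² = (I + T*T)^{-1}), and moreover the range of a equals D = dom T. -/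
noncomputable section

local notation "⟪" x ", " y "⟫" => @inner ℂ _ _ x y

private lemma vonNeumann_surj {H₁ H₂ : Type*}
    [NormedAddCommGroup H₁] [InnerProductSpace ℂ H₁] [CompleteSpace H₁]
    [NormedAddCommGroup H₂] [InnerProductSpace ℂ H₂] [CompleteSpace H₂]
    (T : H₁ →ₗ.[ℂ] H₂)
    (hdense : Dense (T.domain : Set H₁))
    (hclosed : T.IsClosed) (h : H₁) :
    ∃ (x : T.domain) (hx : (T x : H₂) ∈ T.adjoint.domain),
      (x : H₁) + T.adjoint ⟨T x, hx⟩ = h := by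
  classical
  set φ := WithLp.prodContinuousLinearEquiv 2 ℂ H₁ H₂ with hφ
  set G : Submodule ℂ (WithLp 2 (H₁ × H₂)) :=
    T.graph.comap (φ : WithLp 2 (H₁ × H₂) →ₗ[ℂ] H₁ × H₂) with hGdef
  have hGclosed : IsClosed (G : Set (WithLp 2 (H₁ × H₂))) := by
    have : (G : Set (WithLp 2 (H₁ × H₂))) = ⇑φ ⁻¹' (T.graph : Set (H₁ × H₂)) := rfl
    rw [this]
    exact hclosed.preimage φ.continuous
  haveI : CompleteSpace G := hGclosed.completeSpace_coe
  obtain ⟨y, hy, z, hz, hv⟩ := G.exists_add_mem_mem_orthogonal (φ.symm (h, 0))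
  rw [Submodule.mem_comap] at hy
  rw [LinearPMap.mem_graph_iff] at hy
  obtain ⟨x, hx1, hx2⟩ := hy
  -- the orthogonality condition
  have horth : ∀ w : T.domain, ⟪(w : H₁), (φ z).1⟫ + ⟪T w, (φ z).2⟫ = 0 := by
    intro w
    have hzmem : φ.symm ((w : H₁), T w) ∈ G := by
      rw [Submodule.mem_comap]
      have happ : (φ : WithLp 2 (H₁ × H₂) →ₗ[ℂ] H₁ × H₂) (φ.symm ((w : H₁), T w))
          = ((w : H₁), T w) := φ.apply_symm_apply _
      rw [happ]
      exact T.mem_graph w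
    have h0 := (Submodule.mem_orthogonal G z).mp hz _ hzmem
    rw [WithLp.prod_inner_apply] at h0
    exact h0
  have horth' : ∀ w : T.domain, ⟪(φ z).2, T w⟫ = ⟪-(φ z).1, (w : H₁)⟫ := by
    intro w
    have := congrArg (starRingEnd ℂ) (horth w)
    simp only [map_add, inner_conj_symm, map_zero] at this
    rw [inner_neg_left]
    linear_combination this
  have hz2mem : (φ z).2 ∈ T.adjoint.domain :=
    LinearPMap.mem_adjoint_domain_of_exists _ ⟨-(φ z).1, fun w => (horth' w).symm⟩
  have hz2adj : T.adjoint ⟨(φ z).2, hz2mem⟩ = -(φ z).1 :=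
    LinearPMap.adjoint_apply_eq hdense _ (fun w => (horth' w).symm)
  -- coordinates
  have hyz : φ y + φ z = (h, 0) := by
    rw [← map_add, ← hv, φ.apply_symm_apply]
  have hc1 : (x : H₁) + (φ z).1 = h := by
    have := congrArg Prod.fst hyz
    simp only [Prod.fst_add] at this
    rw [← this, hx1]
    rfl
  have hc2 : (T x : H₂) + (φ z).2 = 0 := by
    have := congrArg Prod.snd hyz
    simp only [Prod.snd_add] at this
    rw [← this, hx2]
    rfl
  have hTx : (T x : H₂) = -(φ z).2 := eq_neg_of_add_eq_zero_left hc2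
  have hTxmem : (T x : H₂) ∈ T.adjoint.domain := by
    rw [hTx]; exact neg_mem hz2mem
  refine ⟨x, hTxmem, ?_⟩
  have : (⟨(T x : H₂), hTxmem⟩ : T.adjoint.domain) = -⟨(φ z).2, hz2mem⟩ :=
    Subtype.ext hTx
  rw [this, T.adjoint.map_neg, hz2adj, neg_neg, hc1]

/-- let `T` be a closed, densely defined operator from `H₁` to `H₂`, and
let `a ≥ 0` be a bounded operator with range contained in `dom T` such that
`a²((I + T*T)x) = x` for every `x ∈ dom(T*T)`. Then for every `h ∈ H₁` one has
`a²h ∈ dom(T*T)` and `(I + T*T)(a²h) = h` (so `a² = (I + T*T)⁻¹`), and moreover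
`range a = dom T`. -/
theorem statement_13 {H₁ H₂ : Type*}
    [NormedAddCommGroup H₁] [InnerProductSpace ℂ H₁] [CompleteSpace H₁]
    [NormedAddCommGroup H₂] [InnerProductSpace ℂ H₂] [CompleteSpace H₂]
    (T : H₁ →ₗ.[ℂ] H₂)
    (hdense : Dense (T.domain : Set H₁))
    (hclosed : T.IsClosed)
    (a : H₁ →L[ℂ] H₁) (ha : a.IsPositive)
    (hrange : Set.range a ⊆ (T.domain : Set H₁))
    (hkey : ∀ (x : T.domain) (hx : (T x : H₂) ∈ T.adjoint.domain),
      a (a ((x : H₁) + T.adjoint ⟨T x, hx⟩)) = (x : H₁)) :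
    (∀ h : H₁, ∃ (h1 : a (a h) ∈ T.domain) (h2 : T ⟨a (a h), h1⟩ ∈ T.adjoint.domain),
        a (a h) + T.adjoint ⟨T ⟨a (a h), h1⟩, h2⟩ = h) ∧
    Set.range a = (T.domain : Set H₁) := by
  have hself : ∀ u v : H₁, ⟪a u, v⟫ = ⟪u, a v⟫ := fun u v => by
    rw [← ContinuousLinearMap.adjoint_inner_left, ha.isSelfAdjoint.adjoint_eq]
  have hmem : ∀ h : H₁, a h ∈ T.domain := fun h => hrange (Set.mem_range_self h)
  -- part 1
  have part1 : ∀ h : H₁, ∃ (h1 : a (a h) ∈ T.domain)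
      (h2 : T ⟨a (a h), h1⟩ ∈ T.adjoint.domain),
      a (a h) + T.adjoint ⟨T ⟨a (a h), h1⟩, h2⟩ = h := by
    intro h
    obtain ⟨x, hx, hxeq⟩ := vonNeumann_surj T hdense hclosed h
    have hah : a (a h) = (x : H₁) := by
      have := hkey x hx
      rwa [hxeq] at this
    have key : ∀ c : H₁, c = (x : H₁) →
        ∃ (h1 : c ∈ T.domain) (h2 : T ⟨c, h1⟩ ∈ T.adjoint.domain),
          c + T.adjoint ⟨T ⟨c, h1⟩, h2⟩ = h := by
      rintro c rfl
      exact ⟨x.2, hx, hxeq⟩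
    exact key _ hah
  refine ⟨part1, ?_⟩
  -- part 2 : range a = dom T
  apply le_antisymm hrange
  -- b = T ∘ a as a linear map
  let bl : H₁ →ₗ[ℂ] H₂ :=
    { toFun := fun h => T ⟨a h, hmem h⟩
      map_add' := fun u v => by
        have heq : (⟨a (u + v), hmem (u + v)⟩ : T.domain) = ⟨a u, hmem u⟩ + ⟨a v, hmem v⟩ :=
          Subtype.ext (by simp)
        show T ⟨a (u + v), hmem (u + v)⟩ = T ⟨a u, hmem u⟩ + T ⟨a v, hmem v⟩
        rw [heq, T.map_add]
      map_smul' := fun c u => by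
        have heq : (⟨a (c • u), hmem (c • u)⟩ : T.domain) = c • ⟨a u, hmem u⟩ :=
          Subtype.ext (by simp)
        show T ⟨a (c • u), hmem (c • u)⟩ = c • T ⟨a u, hmem u⟩
        rw [heq, T.map_smul] }
  have hblcont : Continuous bl := by
    apply bl.continuous_of_seq_closed_graph
    intro u x y hu hbu
    have htend : Filter.Tendsto (fun n => ((a (u n) : H₁), bl (u n))) Filter.atTop
        (nhds (a x, y)) :=
      Filter.Tendsto.prodMk_nhds ((a.continuous.tendsto x).comp hu) hbu
    have hmem' : ∀ n, ((a (u n) : H₁), bl (u n)) ∈ (T.graph : Set (H₁ × H₂)) := fun n =>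
      T.mem_graph ⟨a (u n), hmem (u n)⟩
    have hlim : ((a x : H₁), y) ∈ (T.graph : Set (H₁ × H₂)) :=
      hclosed.mem_of_tendsto htend (Filter.Eventually.of_forall hmem')
    rw [SetLike.mem_coe, LinearPMap.mem_graph_iff] at hlim
    obtain ⟨w, hw1, hw2⟩ := hlim
    have : (⟨a x, hmem x⟩ : T.domain) = w := Subtype.ext hw1.symm
    show y = T ⟨a x, hmem x⟩
    rw [this, hw2]
  let b : H₁ →L[ℂ] H₂ := ⟨bl, hblcont⟩
  intro x₀ hx₀
  set y := a x₀ + ContinuousLinearMap.adjoint b (T ⟨x₀, hx₀⟩) with hy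
  have hay : a y = x₀ := by
    apply ext_inner_right ℂ
    intro h
    obtain ⟨x, hx, hxeq⟩ := vonNeumann_surj T hdense hclosed h
    have hah : a (a h) = (x : H₁) := by
      have := hkey x hx
      rwa [hxeq] at this
    have hb : b (a h) = T x := by
      show T ⟨a (a h), hmem (a h)⟩ = T x
      have : (⟨a (a h), hmem (a h)⟩ : T.domain) = x := Subtype.ext hah
      rw [this]
    have hform := LinearPMap.adjoint_isFormalAdjoint hdense ⟨(T x : H₂), hx⟩
      (⟨x₀, hx₀⟩ : T.domain)
    -- hform : ⟪T.adjoint ⟨T x, hx⟩, x₀⟫ = ⟪T x, T ⟨x₀, hx₀⟩⟫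
    have hform' : ⟪x₀, T.adjoint ⟨(T x : H₂), hx⟩⟫ = ⟪T ⟨x₀, hx₀⟩, (T x : H₂)⟫ := by
      have := congrArg (starRingEnd ℂ) hform
      simpa only [inner_conj_symm] using this
    calc ⟪a y, h⟫ = ⟪y, a h⟫ := hself y h
      _ = ⟪a x₀, a h⟫ + ⟪ContinuousLinearMap.adjoint b (T ⟨x₀, hx₀⟩), a h⟫ := by
          rw [hy, inner_add_left]
      _ = ⟪x₀, a (a h)⟫ + ⟪(T ⟨x₀, hx₀⟩ : H₂), b (a h)⟫ := by
          rw [hself, ContinuousLinearMap.adjoint_inner_left]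
      _ = ⟪x₀, (x : H₁)⟫ + ⟪(T ⟨x₀, hx₀⟩ : H₂), (T x : H₂)⟫ := by rw [hah, hb]
      _ = ⟪x₀, (x : H₁)⟫ + ⟪x₀, T.adjoint ⟨(T x : H₂), hx⟩⟫ := by rw [hform']
      _ = ⟪x₀, (x : H₁) + T.adjoint ⟨(T x : H₂), hx⟩⟫ := (inner_add_right _ _ _).symm
      _ = ⟪x₀, h⟫ := by rw [hxeq]
  exact ⟨y, hay⟩

end
end

section
/- Let H, K₁, K₂ be complex Hilbert spaces and let G ∈ B(H, K₁) and A₀ ∈ B(H, K₂) satisfy G*G + A₀*A₀ ≤ I. Let a := (I − G*G − A₀*A₀)^{1/2} ∈ B(H) be the positive square root. Then the range of G* is contained in the range of a if and only if there exists ρ with 0 ≤ ρ < 1 such that G*G ≤ ρ(I − A₀*A₀); equivalently, if and only if there exists r with 0 < r < 1 such that r(I − A₀*A₀) ≤ a². -/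
/-!
By Douglas' lemma, `range G* ⊆ range a` iff `‖G x‖ ≤ M ‖a x‖` for some `M`: a preimage `w` of
`G* y` gives `|⟪y, G x⟫| ≤ ‖w‖ ‖a x‖`, which uniform boundedness makes uniform in `y`; conversely
the bound makes `a x ↦ ⟪G* y, x⟫` a bounded functional on `range a`, and Hahn–Banach with Riesz
representation produces the preimage. Since `I − A₀*A₀ = a² + G*G`, both operator inequalities
compare the quadratic forms `‖G x‖²` and `‖a x‖²`, and each of them says precisely that
`‖G x‖ / ‖a x‖` is bounded.
-/

open ContinuousLinearMap InnerProductSpace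

section

variable {𝕜 : Type*} [RCLike 𝕜]

theorem exists_norm_le_mul_of_forall_norm_inner_le {ι F E : Type*}
    [NormedAddCommGroup F] [InnerProductSpace 𝕜 F] [CompleteSpace F] [NormedAddCommGroup E]
    (u : ι → F) (v : ι → E) (h : ∀ y, ∃ c, ∀ i, ‖inner 𝕜 y (u i)‖ ≤ c * ‖v i‖) :
    ∃ M, ∀ i, ‖u i‖ ≤ M * ‖v i‖ := by
  obtain ⟨M, hM⟩ := banach_steinhaus
    (g := fun i : {i // v i ≠ 0} ↦ innerSL 𝕜 ((‖v i‖⁻¹ : 𝕜) • u i)) fun y ↦ by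
      obtain ⟨c, hc⟩ := h y
      refine ⟨c, fun i ↦ ?_⟩
      rw [innerSL_apply_apply, inner_smul_left, norm_mul, RCLike.norm_conj, norm_inv,
        RCLike.norm_ofReal, abs_norm, norm_inner_symm, inv_mul_le_iff₀ (norm_pos_iff.mpr i.2),
        mul_comm]
      exact hc i
  refine ⟨M, fun i ↦ ?_⟩
  by_cases hvi : v i = 0
  · obtain ⟨c, hc⟩ := h (u i)
    have hui : inner 𝕜 (u i) (u i) = 0 := by simpa [hvi] using hc i
    simp [inner_self_eq_zero.mp hui, hvi]
  · have := hM ⟨i, hvi⟩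
    rwa [innerSL_apply_norm, norm_smul, norm_inv, RCLike.norm_ofReal, abs_norm,
      inv_mul_le_iff₀ (norm_pos_iff.mpr hvi), mul_comm] at this

theorem exists_strongDual_apply_eq_of_norm_le {E F : Type*} [AddCommGroup E] [Module 𝕜 E]
    [NormedAddCommGroup F] [NormedSpace 𝕜 F] (φ : E →ₗ[𝕜] 𝕜) (T : E →ₗ[𝕜] F)
    (h : ∃ c, ∀ x, ‖φ x‖ ≤ c * ‖T x‖) : ∃ Φ : StrongDual 𝕜 F, ∀ x, Φ (T x) = φ x := by
  obtain ⟨Φ, hΦ, -⟩ := exists_extension_norm_eq (LinearMap.range T) (φ.compLeftInverse T)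
  exact ⟨Φ, fun x ↦ (hΦ ⟨T x, x, rfl⟩).trans (φ.compLeftInverse_apply_of_bdd T h x _ rfl)⟩

variable {E F : Type*} [NormedAddCommGroup E] [InnerProductSpace 𝕜 E] [CompleteSpace E]
  [NormedAddCommGroup F] [InnerProductSpace 𝕜 F] [CompleteSpace F]

theorem mem_range_adjoint_of_norm_inner_le (T : E →L[𝕜] F) {v : E} {c : ℝ}
    (h : ∀ x, ‖inner 𝕜 v x‖ ≤ c * ‖T x‖) : v ∈ Set.range (adjoint T) := by
  obtain ⟨Φ, hΦ⟩ := exists_strongDual_apply_eq_of_norm_le (innerₛₗ 𝕜 v) T.toLinearMap ⟨c, h⟩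
  refine ⟨(toDual 𝕜 F).symm Φ, ext_inner_right 𝕜 fun x ↦ ?_⟩
  rw [adjoint_inner_left, toDual_symm_apply]
  exact hΦ x

theorem range_adjoint_subset_range_adjoint_iff {F₁ F₂ : Type*}
    [NormedAddCommGroup F₁] [InnerProductSpace 𝕜 F₁] [CompleteSpace F₁]
    [NormedAddCommGroup F₂] [InnerProductSpace 𝕜 F₂] [CompleteSpace F₂]
    (S : E →L[𝕜] F₁) (T : E →L[𝕜] F₂) :
    Set.range (adjoint S) ⊆ Set.range (adjoint T) ↔ ∃ M, ∀ x, ‖S x‖ ≤ M * ‖T x‖ := by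
  constructor
  · intro h
    refine exists_norm_le_mul_of_forall_norm_inner_le (𝕜 := 𝕜) S T fun y ↦ ?_
    obtain ⟨w, hw⟩ := h ⟨y, rfl⟩
    refine ⟨‖w‖, fun x ↦ ?_⟩
    rw [← adjoint_inner_left, ← hw, adjoint_inner_left]
    exact norm_inner_le_norm _ _
  · rintro ⟨M, hM⟩ _ ⟨y, rfl⟩
    refine mem_range_adjoint_of_norm_inner_le T (c := ‖y‖ * M) fun x ↦ ?_
    rw [adjoint_inner_left, mul_assoc]
    exact (norm_inner_le_norm _ _).trans (by gcongr; exact hM x)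

theorem isPositive_smul_adjoint_comp_self_sub_iff {F₁ F₂ : Type*}
    [NormedAddCommGroup F₁] [InnerProductSpace 𝕜 F₁] [CompleteSpace F₁]
    [NormedAddCommGroup F₂] [InnerProductSpace 𝕜 F₂] [CompleteSpace F₂]
    (S : E →L[𝕜] F₁) (T : E →L[𝕜] F₂) (s t : ℝ) :
    ((s : 𝕜) • (adjoint T ∘L T) - (t : 𝕜) • (adjoint S ∘L S)).IsPositive ↔
      ∀ x, t * ‖S x‖ ^ 2 ≤ s * ‖T x‖ ^ 2 := by
  have hsa : IsSelfAdjoint ((s : 𝕜) • (adjoint T ∘L T) - (t : 𝕜) • (adjoint S ∘L S)) :=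
    (IsSelfAdjoint.smul (RCLike.conj_ofReal s) (isPositive_adjoint_comp_self T).isSelfAdjoint).sub
      (IsSelfAdjoint.smul (RCLike.conj_ofReal t) (isPositive_adjoint_comp_self S).isSelfAdjoint)
  rw [isPositive_def', and_iff_right hsa]
  refine forall_congr' fun x ↦ ?_
  rw [reApplyInnerSelf_apply, sub_apply, inner_sub_left, map_sub, smul_apply, smul_apply,
    inner_smul_left, inner_smul_left, RCLike.conj_ofReal, RCLike.conj_ofReal, RCLike.re_ofReal_mul,
    RCLike.re_ofReal_mul, ← apply_norm_sq_eq_inner_adjoint_left,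
    ← apply_norm_sq_eq_inner_adjoint_left, sub_nonneg]

end

theorem exists_le_mul_iff_exists_mul_sq_le {ι : Type*} {g s : ι → ℝ} (hg : ∀ i, 0 ≤ g i)
    (hs : ∀ i, 0 ≤ s i) :
    (∃ M, ∀ i, g i ≤ M * s i) ↔ ∃ r, 0 < r ∧ r < 1 ∧ ∀ i, r * g i ^ 2 ≤ (1 - r) * s i ^ 2 := by
  constructor
  · rintro ⟨M, hM⟩
    refine ⟨(2 + M ^ 2)⁻¹, by positivity, inv_lt_one_of_one_lt₀ (by nlinarith), fun i ↦ ?_⟩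
    have hsq : g i ^ 2 ≤ M ^ 2 * s i ^ 2 := by
      rw [← mul_pow]; exact pow_le_pow_left₀ (hg i) (hM i) 2
    have h1 : (1 - (2 + M ^ 2)⁻¹) = (1 + M ^ 2) * (2 + M ^ 2)⁻¹ := by field_simp; ring
    rw [h1]
    have := inv_pos.mpr (show (0 : ℝ) < 2 + M ^ 2 by positivity)
    nlinarith [sq_nonneg (s i)]
  · rintro ⟨r, hr0, hr1, h⟩
    refine ⟨r⁻¹, fun i ↦ ?_⟩
    rw [inv_mul_eq_div, le_div_iff₀ hr0, mul_comm]
    refine le_of_sq_le_sq ?_ (hs i)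
    have := mul_le_mul_of_nonneg_left (h i) hr0.le
    nlinarith [sq_nonneg (s i), sq_nonneg r]

theorem exists_one_sub_mul_le_iff {ι : Type*} {u v : ι → ℝ} (hv : ∀ i, 0 ≤ v i) :
    (∃ ρ, 0 ≤ ρ ∧ ρ < 1 ∧ ∀ i, (1 - ρ) * u i ≤ ρ * v i) ↔
      ∃ r, 0 < r ∧ r < 1 ∧ ∀ i, r * u i ≤ (1 - r) * v i := by
  constructor
  · rintro ⟨ρ, hρ0, hρ1, h⟩
    exact ⟨(1 - ρ) / 2, by linarith, by linarith, fun i ↦ by nlinarith [h i, hv i]⟩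
  · rintro ⟨r, hr0, hr1, h⟩
    exact ⟨1 - r, by linarith, by linarith, fun i ↦ by rw [sub_sub_cancel]; exact h i⟩

open ContinuousLinearMap in
theorem statement_14_general {H K₁ K₂ : Type*}
    [NormedAddCommGroup H] [InnerProductSpace ℂ H] [CompleteSpace H]
    [NormedAddCommGroup K₁] [InnerProductSpace ℂ K₁] [CompleteSpace K₁]
    [NormedAddCommGroup K₂] [InnerProductSpace ℂ K₂] [CompleteSpace K₂]
    (G : H →L[ℂ] K₁) (A₀ : H →L[ℂ] K₂)
    -- `a` is the positive square root of `I − G*G − A₀*A₀`: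
    (a : H →L[ℂ] H) (ha : a.IsPositive)
    (ha2 : a.comp a = 1 - (adjoint G).comp G - (adjoint A₀).comp A₀) :
    (Set.range (⇑(adjoint G)) ⊆ Set.range (⇑a) ↔
      ∃ ρ : ℝ, 0 ≤ ρ ∧ ρ < 1 ∧
        ((ρ : ℂ) • (1 - (adjoint A₀).comp A₀) - (adjoint G).comp G).IsPositive) ∧
    (Set.range (⇑(adjoint G)) ⊆ Set.range (⇑a) ↔
      ∃ r : ℝ, 0 < r ∧ r < 1 ∧
        (a.comp a - (r : ℂ) • (1 - (adjoint A₀).comp A₀)).IsPositive) := by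
  have hsa : adjoint a = a := ha.isSelfAdjoint.adjoint_eq
  have hD : 1 - (adjoint A₀).comp A₀ = (adjoint a).comp a + (adjoint G).comp G := by
    rw [hsa, ha2]; abel
  have hB (ρ : ℝ) : ((ρ : ℂ) • (1 - (adjoint A₀).comp A₀) - (adjoint G).comp G).IsPositive ↔
      ∀ x, (1 - ρ) * ‖G x‖ ^ 2 ≤ ρ * ‖a x‖ ^ 2 := by
    rw [← isPositive_smul_adjoint_comp_self_sub_iff, hD]; push_cast; congr! 1; module
  have hC (r : ℝ) : (a.comp a - (r : ℂ) • (1 - (adjoint A₀).comp A₀)).IsPositive ↔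
      ∀ x, r * ‖G x‖ ^ 2 ≤ (1 - r) * ‖a x‖ ^ 2 := by
    rw [← isPositive_smul_adjoint_comp_self_sub_iff, hD, hsa]; push_cast; congr! 1; module
  have douglas := range_adjoint_subset_range_adjoint_iff G a
  rw [hsa] at douglas
  simp_rw [hB, hC, douglas]
  have hAC := exists_le_mul_iff_exists_mul_sq_le (g := fun x ↦ ‖G x‖) (s := fun x ↦ ‖a x‖)
    (fun _ ↦ norm_nonneg _) (fun _ ↦ norm_nonneg _)
  exact ⟨hAC.trans (exists_one_sub_mul_le_iff fun _ ↦ sq_nonneg _).symm, hAC⟩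

open ContinuousLinearMap in
/-- let `G : H → K₁` and `A₀ : H → K₂` satisfy `G*G + A₀*A₀ ≤ I`, and let
`a := (I − G*G − A₀*A₀)^{1/2}` be the positive square root. Then
`range G* ⊆ range a` iff there is `0 ≤ ρ < 1` with `G*G ≤ ρ(I − A₀*A₀)`, iff there is
`0 < r < 1` with `r(I − A₀*A₀) ≤ a²`. -/
theorem statement_14 {H K₁ K₂ : Type*}
    [NormedAddCommGroup H] [InnerProductSpace ℂ H] [CompleteSpace H]
    [NormedAddCommGroup K₁] [InnerProductSpace ℂ K₁] [CompleteSpace K₁]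
    [NormedAddCommGroup K₂] [InnerProductSpace ℂ K₂] [CompleteSpace K₂]
    (G : H →L[ℂ] K₁) (A₀ : H →L[ℂ] K₂)
    (hcontr : (1 - (adjoint G).comp G - (adjoint A₀).comp A₀).IsPositive)
    -- `a` is the positive square root of `I − G*G − A₀*A₀`:
    (a : H →L[ℂ] H) (ha : a.IsPositive)
    (ha2 : a.comp a = 1 - (adjoint G).comp G - (adjoint A₀).comp A₀) :
    (Set.range (⇑(adjoint G)) ⊆ Set.range (⇑a) ↔
      ∃ ρ : ℝ, 0 ≤ ρ ∧ ρ < 1 ∧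
        ((ρ : ℂ) • (1 - (adjoint A₀).comp A₀) - (adjoint G).comp G).IsPositive) ∧
    (Set.range (⇑(adjoint G)) ⊆ Set.range (⇑a) ↔
      ∃ r : ℝ, 0 < r ∧ r < 1 ∧
        (a.comp a - (r : ℂ) • (1 - (adjoint A₀).comp A₀)).IsPositive) :=
  statement_14_general G A₀ a ha ha2
end
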